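/- Quantum union bound for density operators: let ρ be a density matrix on ℂ^d (positive semi-definite with trace one), let P₁, ..., P_L be orthogonal projection matrices on ℂ^d, and let c > 0. Then 1 − Tr(P_L P_{L-1} ⋯ P₁ ρ P₁ ⋯ P_{L-1} P_L) ≤ (1 + c)·Tr((I − P_L) ρ) + (2 + c + c⁻¹)·∑_{i=2}^{L-1} Tr((I − P_i) ρ) + (2 + c⁻¹)·Tr((I − P₁) ρ). -/

import Mathlib

/-!
The form `⟪X, Y⟫ = Tr (Y ρ Xᴴ)` is a semi-inner product on matrices, for which left multiplication
by a Hermitian projection is an orthogonal projection, `‖1‖² = Tr ρ = 1`,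
`‖P_L ⋯ P₁‖² = Tr (P_L ⋯ P₁ ρ P₁ ⋯ P_L)` and `‖1 - P_i‖² = Tr ((1 - P_i) ρ)`. So it suffices to
bound `‖v₀‖² - ‖v_L‖²` along a chain `v_{k+1} = p_{k+1} v_k` of orthogonal projections in an inner
product space. There the potential `‖v₀‖² - ‖v_n‖² + (1 + c⁻¹) ‖v₀ - v_n‖²` grows by at most
`(2 + c + c⁻¹) ‖v₀ - p_{n+1} v₀‖²` per step, by Pythagoras and
`‖a - b‖² ≤ (1 + c) ‖a‖² + (1 + c⁻¹) ‖b‖²`, and at the end `‖v₀ - v_L‖² ≥ ‖v₀ - p_L v₀‖²`.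
-/

open scoped ComplexOrder

/-- `descM P k = P k * P (k-1) * ⋯ * P 1`, empty product is the identity matrix. -/
noncomputable def descM {d : ℕ} (P : ℕ → Matrix (Fin d) (Fin d) ℂ) : ℕ → Matrix (Fin d) (Fin d) ℂ
  | 0 => 1
  | k + 1 => P (k + 1) * descM P k

/-- `ascM P k = P 1 * P 2 * ⋯ * P k`, empty product is the identity matrix. -/
noncomputable def ascM {d : ℕ} (P : ℕ → Matrix (Fin d) (Fin d) ℂ) : ℕ → Matrix (Fin d) (Fin d) ℂ
  | 0 => 1
  | k + 1 => ascM P k * P (k + 1)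

open Finset Matrix

theorem add_sq_le_one_add_mul_sq_add {a b c : ℝ} (hc : 0 < c) :
    (a + b) ^ 2 ≤ (1 + c) * a ^ 2 + (1 + c⁻¹) * b ^ 2 := by
  have key : 2 * a * b ≤ c * a ^ 2 + c⁻¹ * b ^ 2 := by
    rw [← mul_le_mul_iff_right₀ hc]
    field_simp
    nlinarith [sq_nonneg (c * a - b)]
  nlinarith

theorem norm_sub_sq_le {E : Type*} [SeminormedAddGroup E] {c : ℝ} (hc : 0 < c) (x y : E) :
    ‖x - y‖ ^ 2 ≤ (1 + c) * ‖x‖ ^ 2 + (1 + c⁻¹) * ‖y‖ ^ 2 :=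
  (pow_le_pow_left₀ (norm_nonneg _) (norm_sub_le x y) 2).trans (add_sq_le_one_add_mul_sq_add hc)

namespace LinearMap.IsSymmetricProjection

variable {𝕜 E : Type*} [RCLike 𝕜] [SeminormedAddCommGroup E] [InnerProductSpace 𝕜 E]
  {p : E →ₗ[𝕜] E}

theorem inner_apply_sub_apply (hp : p.IsSymmetricProjection) (x y : E) :
    inner 𝕜 (p x) (y - p y) = 0 := by
  rw [hp.isSymmetric, map_sub, ← Module.End.mul_apply, hp.isIdempotentElem.eq, sub_self,
    inner_zero_right]

theorem norm_apply_add_sub_apply_sq (hp : p.IsSymmetricProjection) (x y : E) :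
    ‖p x + (y - p y)‖ ^ 2 = ‖p x‖ ^ 2 + ‖y - p y‖ ^ 2 := by
  simp only [sq]
  exact norm_add_sq_eq_norm_sq_add_norm_sq_of_inner_eq_zero _ _ (hp.inner_apply_sub_apply x y)

theorem norm_sq_eq_norm_apply_sq_add (hp : p.IsSymmetricProjection) (x : E) :
    ‖x‖ ^ 2 = ‖p x‖ ^ 2 + ‖x - p x‖ ^ 2 := by
  rw [← hp.norm_apply_add_sub_apply_sq, add_sub_cancel]

theorem norm_sub_apply_sq (hp : p.IsSymmetricProjection) (u x : E) :
    ‖u - p x‖ ^ 2 = ‖u - p u‖ ^ 2 + ‖p (u - x)‖ ^ 2 := by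
  rw [add_comm, ← hp.norm_apply_add_sub_apply_sq, map_sub]
  congr 2
  abel

theorem norm_sq_sub_norm_apply_sq_add_le (hp : p.IsSymmetricProjection) {c : ℝ} (hc : 0 < c)
    (u x : E) :
    ‖x‖ ^ 2 - ‖p x‖ ^ 2 + (1 + c⁻¹) * (‖u - p x‖ ^ 2 - ‖u - x‖ ^ 2)
      ≤ (2 + c + c⁻¹) * ‖u - p u‖ ^ 2 := by
  set w := u - x
  have hx : x - p x = (u - p u) - (w - p w) := by
    simp only [w, map_sub]
    abel
  have hsplit := norm_sub_sq_le hc (u - p u) (w - p w)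
  rw [← hx] at hsplit
  have hx_pyth := hp.norm_sq_eq_norm_apply_sq_add x
  have hw_pyth := hp.norm_sq_eq_norm_apply_sq_add w
  have hu := hp.norm_sub_apply_sq u x
  linear_combination hsplit + hx_pyth + (1 + c⁻¹) * (hu - hw_pyth)

end LinearMap.IsSymmetricProjection

section ProjectionChain

variable {𝕜 E : Type*} [RCLike 𝕜] [SeminormedAddCommGroup E] [InnerProductSpace 𝕜 E]
  {p : ℕ → E →ₗ[𝕜] E} {v : ℕ → E} {L : ℕ} {c : ℝ}

theorem norm_sq_sub_norm_chain_sq_add_le (hp : ∀ i ∈ Icc 1 L, (p i).IsSymmetricProjection)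
    (hv : ∀ k < L, v (k + 1) = p (k + 1) (v k)) (hc : 0 < c) {n : ℕ} (hn : 1 ≤ n) (hnL : n ≤ L) :
    ‖v 0‖ ^ 2 - ‖v n‖ ^ 2 + (1 + c⁻¹) * ‖v 0 - v n‖ ^ 2
      ≤ (2 + c⁻¹) * ‖v 0 - p 1 (v 0)‖ ^ 2
        + (2 + c + c⁻¹) * ∑ i ∈ Icc 2 n, ‖v 0 - p i (v 0)‖ ^ 2 := by
  induction n, hn using Nat.le_induction with
  | base =>
    rw [hv 0 (by omega), Icc_eq_empty (by omega), sum_empty,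
      (hp 1 (by simp; omega)).norm_sq_eq_norm_apply_sq_add (v 0)]
    linarith
  | succ n hn ih =>
    have step := (hp (n + 1) (by simp; omega)).norm_sq_sub_norm_apply_sq_add_le hc (v 0) (v n)
    rw [← hv n (by omega)] at step
    rw [sum_Icc_succ_top (by omega)]
    linarith [ih (by omega)]

theorem norm_sq_sub_norm_chain_sq_le (hp : ∀ i ∈ Icc 1 L, (p i).IsSymmetricProjection)
    (hv : ∀ k < L, v (k + 1) = p (k + 1) (v k)) (hL : 1 ≤ L) (hc : 0 < c) :
    ‖v 0‖ ^ 2 - ‖v L‖ ^ 2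
      ≤ (1 + c) * ‖v 0 - p L (v 0)‖ ^ 2
        + (2 + c + c⁻¹) * ∑ i ∈ Icc 2 (L - 1), ‖v 0 - p i (v 0)‖ ^ 2
        + (2 + c⁻¹) * ‖v 0 - p 1 (v 0)‖ ^ 2 := by
  have hpotential := norm_sq_sub_norm_chain_sq_add_le hp hv hc hL le_rfl
  obtain ⟨n, rfl⟩ : ∃ n, L = n + 1 := ⟨L - 1, by omega⟩
  have hlast : ‖v 0 - p (n + 1) (v 0)‖ ^ 2 ≤ ‖v 0 - v (n + 1)‖ ^ 2 := by
    rw [hv n (by omega), (hp (n + 1) (by simp)).norm_sub_apply_sq _ (v n)]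
    exact le_add_of_nonneg_right (sq_nonneg _)
  have hc_inv : 0 ≤ c⁻¹ := by positivity
  rcases n with _ | n
  · rw [Icc_eq_empty (by omega), sum_empty] at hpotential ⊢
    nlinarith [sq_nonneg ‖v 0 - p 1 (v 0)‖]
  · rw [sum_Icc_succ_top (by omega)] at hpotential
    simp only [add_tsub_cancel_right]
    nlinarith

end ProjectionChain

namespace Matrix

variable {𝕜 n : Type*} [RCLike 𝕜] [Fintype n]

theorem trace_mul_mul_conjTranspose_of_isStarProjection {Q : Matrix n n 𝕜}
    (hQ : IsStarProjection Q) (ρ : Matrix n n 𝕜) :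
    (Q * ρ * Qᴴ).trace = (Q * ρ).trace := by
  rw [← star_eq_conjTranspose, hQ.isSelfAdjoint.star_eq, trace_mul_comm, ← mul_assoc,
    hQ.isIdempotentElem.eq]

variable (ρ : Matrix n n 𝕜) (hρ : ρ.PosSemidef)

theorem norm_sq_eq_re_trace_mul_mul_conjTranspose (x : Matrix n n 𝕜) :
    let := ρ.toMatrixSeminormedAddCommGroup hρ
    let := ρ.toMatrixInnerProductSpace hρ
    ‖x‖ ^ 2 = RCLike.re (x * ρ * xᴴ).trace := by
  intro _ _
  rw [norm_sq_eq_re_inner (𝕜 := 𝕜)]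
  rfl

theorem isSymmetricProjection_mulLeft {P : Matrix n n 𝕜} (hP : IsStarProjection P) :
    let := ρ.toMatrixSeminormedAddCommGroup hρ
    let := ρ.toMatrixInnerProductSpace hρ
    (LinearMap.mulLeft 𝕜 P).IsSymmetricProjection := by
  intro _ _
  refine ⟨LinearMap.ext fun x => ?_, fun x y => ?_⟩
  · simp [← mul_assoc, hP.isIdempotentElem.eq]
  · change (y * ρ * (P * x)ᴴ).trace = (P * y * ρ * xᴴ).trace
    rw [conjTranspose_mul, ← star_eq_conjTranspose P, hP.isSelfAdjoint.star_eq, ← mul_assoc,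
      trace_mul_comm, ← mul_assoc, ← mul_assoc]

end Matrix

theorem conjTranspose_descM {d : ℕ} {P : ℕ → Matrix (Fin d) (Fin d) ℂ} {n : ℕ}
    (hP : ∀ i ∈ Icc 1 n, (P i).IsHermitian) : (descM P n)ᴴ = ascM P n := by
  induction n with
  | zero => simp [descM, ascM]
  | succ n ih =>
    rw [descM, ascM, conjTranspose_mul, (hP (n + 1) (by simp)).eq,
      ih fun i hi => hP i (Icc_subset_Icc_right n.le_succ hi)]

theorem stmt5 {d : ℕ} (ρ : Matrix (Fin d) (Fin d) ℂ)
    (hρ : ρ.PosSemidef) (hρtr : ρ.trace = 1)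
    (L : ℕ) (hL : 1 ≤ L) (P : ℕ → Matrix (Fin d) (Fin d) ℂ)
    (hherm : ∀ i ∈ Finset.Icc 1 L, (P i).IsHermitian)
    (hidem : ∀ i ∈ Finset.Icc 1 L, P i * P i = P i)
    (c : ℝ) (hc : 0 < c) :
    1 - ((descM P L * ρ * ascM P L).trace).re
      ≤ (1 + c) * (((1 - P L) * ρ).trace).re
        + (2 + c + c⁻¹) * ∑ i ∈ Finset.Icc 2 (L - 1), (((1 - P i) * ρ).trace).re
        + (2 + c⁻¹) * (((1 - P 1) * ρ).trace).re := by
  have hP : ∀ i ∈ Icc 1 L, IsStarProjection (P i) := fun i hi => ⟨hidem i hi, hherm i hi⟩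
  let := ρ.toMatrixSeminormedAddCommGroup hρ
  let := ρ.toMatrixInnerProductSpace hρ
  have hnorm := ρ.norm_sq_eq_re_trace_mul_mul_conjTranspose hρ
  have hdefect : ∀ i ∈ Icc 1 L, ‖descM P 0 - P i * descM P 0‖ ^ 2 = ((1 - P i) * ρ).trace.re := by
    intro i hi
    rw [descM, mul_one, hnorm, trace_mul_mul_conjTranspose_of_isStarProjection (hP i hi).one_sub]
    exact RCLike.re_to_complex
  have hchain := norm_sq_sub_norm_chain_sq_le (p := fun i => LinearMap.mulLeft ℂ (P i))
    (v := descM P) (fun i hi => ρ.isSymmetricProjection_mulLeft hρ (hP i hi)) (fun _ _ => rfl) hL hc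
  simp only [LinearMap.mulLeft_apply] at hchain
  rwa [hdefect L (by simp; omega), hdefect 1 (by simp; omega),
    sum_congr rfl fun i hi => hdefect i (Icc_subset_Icc (by omega) (by omega) hi),
    hnorm, hnorm, conjTranspose_descM hherm, descM, conjTranspose_one, one_mul, mul_one, hρtr,
    RCLike.one_re] at hchain
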